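/- arXiv:1008.4215 — 4 statements merged into one kernel-verified Lean document; each statement's English description precedes it below -/
import Mathlib

section
/- Let f be holomorphic on the unit disc with power series f(z) = Σ_{n≥0} a_n z^n. If |f(z)| < 1 for all z in the unit disc, then Σ_{n≥0} |a_n| (1/3)^n ≤ 1. -/
/-!
For `n ≥ 1`, averaging `f` over the rotations `z ↦ ζʲ z` by the `n`-th roots of unity keeps
only the coefficients `a (n * m)`, so `H w = ∑ a (n * m) wᵐ` (with `w = zⁿ`) is again a
self-map of the unit disc, with `H 0 = a 0` and `H' 0 = a n`. The Schwarz–Pick inequality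
`‖H' 0‖ ≤ 1 - ‖H 0‖²` gives Wiener's bound `‖a n‖ ≤ 1 - ‖a 0‖²`, and summing,
`∑ ‖a n‖ 3⁻ⁿ ≤ ‖a 0‖ + (1 - ‖a 0‖²) / 2 = 1 - (1 - ‖a 0‖)² / 2`.
-/

open Metric Set FormalMultilinearSeries
open scoped NNReal ComplexConjugate

theorem hasFPowerSeriesOnBall_ofScalars_of_hasSum {𝕜 : Type*} [DenselyNormedField 𝕜]
    {a : ℕ → 𝕜} {f : 𝕜 → 𝕜} {R : ℝ≥0} (hR : 0 < R)
    (hsum : ∀ z ∈ ball (0 : 𝕜) R, HasSum (fun n => a n * z ^ n) (f z)) :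
    HasFPowerSeriesOnBall f (ofScalars 𝕜 a) 0 R where
  r_le := by
    refine ENNReal.le_of_forall_nnreal_lt fun r hr => ?_
    obtain ⟨z, hrz, hzR⟩ :=
      NormedField.exists_lt_norm_lt 𝕜 r.coe_nonneg (by exact_mod_cast hr : (r : ℝ) < R)
    have hz : ‖z‖₊ ≤ (ofScalars 𝕜 a).radius := by
      refine (ofScalars 𝕜 a).le_radius_of_tendsto (l := 0) ?_
      simpa [ofScalars_norm] using
        (hsum z (mem_ball_zero_iff.2 hzR)).summable.tendsto_atTop_zero.norm
    exact le_trans (by exact_mod_cast hrz.le) hz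
  r_pos := by simpa using hR
  hasSum {y} hy := by
    simpa [ofScalars_apply_eq, mul_comm] using hsum y (by simpa using hy)

theorem Complex.one_sub_conj_mul_ne_zero {c u : ℂ} (hc : ‖c‖ < 1) (hu : ‖u‖ ≤ 1) :
    1 - conj c * u ≠ 0 := by
  intro h
  have hlt : ‖conj c * u‖ < 1 := by
    rw [norm_mul, Complex.norm_conj]
    exact mul_lt_one_of_nonneg_of_lt_one_left (norm_nonneg c) hc hu
  rw [← sub_eq_zero.1 h, norm_one] at hlt
  exact hlt.false

theorem Complex.sq_norm_one_sub_conj_mul_sub_sq_norm_sub (c u : ℂ) :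
    ‖1 - conj c * u‖ ^ 2 - ‖u - c‖ ^ 2 = (1 - ‖c‖ ^ 2) * (1 - ‖u‖ ^ 2) := by
  simp only [Complex.sq_norm, Complex.normSq_apply, Complex.sub_re, Complex.sub_im,
    Complex.mul_re, Complex.mul_im, Complex.one_re, Complex.one_im, Complex.conj_re,
    Complex.conj_im]
  ring

theorem Complex.norm_sub_div_one_sub_conj_mul_lt_one {c u : ℂ} (hc : ‖c‖ < 1) (hu : ‖u‖ < 1) :
    ‖(u - c) / (1 - conj c * u)‖ < 1 := by
  rw [norm_div, div_lt_one (norm_pos_iff.2 (one_sub_conj_mul_ne_zero hc hu.le)),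
    ← sq_lt_sq₀ (norm_nonneg _) (norm_nonneg _), ← sub_pos,
    sq_norm_one_sub_conj_mul_sub_sq_norm_sub]
  apply mul_pos <;> nlinarith [norm_nonneg c, norm_nonneg u]

theorem Complex.norm_deriv_le_one_sub_sq_of_mapsTo_ball {h : ℂ → ℂ}
    (hd : DifferentiableOn ℂ h (ball 0 1)) (hmaps : MapsTo h (ball 0 1) (ball 0 1)) :
    ‖deriv h 0‖ ≤ 1 - ‖h 0‖ ^ 2 := by
  have hh_lt : ∀ w ∈ ball (0 : ℂ) 1, ‖h w‖ < 1 := fun w hw => mem_ball_zero_iff.1 (hmaps hw)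
  set c := h 0
  have hc : ‖c‖ < 1 := hh_lt 0 (mem_ball_self one_pos)
  have hden : ∀ w ∈ ball (0 : ℂ) 1, 1 - conj c * h w ≠ 0 := fun w hw =>
    one_sub_conj_mul_ne_zero hc (hh_lt w hw).le
  set F : ℂ → ℂ := fun w => (h w - c) / (1 - conj c * h w)
  have hF_diff : DifferentiableOn ℂ F (ball 0 1) :=
    (hd.sub_const c).div ((differentiableOn_const 1).sub (hd.const_mul (conj c))) hden
  have hF_maps : MapsTo F (ball 0 1) (closedBall (F 0) 1) := fun w hw => by
    simpa [F, c] using (norm_sub_div_one_sub_conj_mul_lt_one hc (hh_lt w hw)).le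
  have hc_sq : (1 : ℂ) - conj c * c = ((1 - ‖c‖ ^ 2 : ℝ) : ℂ) := by
    push_cast [Complex.conj_mul']
    rfl
  have hpos : 0 < 1 - ‖c‖ ^ 2 := by nlinarith [norm_nonneg c]
  have hF_deriv : deriv F 0 = deriv h 0 / ((1 - ‖c‖ ^ 2 : ℝ) : ℂ) := by
    have hh : HasDerivAt h (deriv h 0) 0 :=
      (hd.differentiableAt (ball_mem_nhds 0 one_pos)).hasDerivAt
    rw [((hh.sub_const c).fun_div ((hh.const_mul (conj c)).const_sub 1)
      (hden 0 (mem_ball_self one_pos))).deriv, ← hc_sq, sub_self, zero_mul, sub_zero, sq,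
      mul_div_mul_right _ _ (hden 0 (mem_ball_self one_pos))]
  have hschwarz := Complex.norm_deriv_le_div_of_mapsTo_ball hF_diff hF_maps one_pos
  rwa [hF_deriv, norm_div, Complex.norm_real, Real.norm_of_nonneg hpos.le, div_one,
    div_le_one hpos] at hschwarz

theorem IsPrimitiveRoot.geom_sum_pow_eq_ite {R : Type*} [CommRing R] [IsDomain R] {ζ : R}
    {n : ℕ} (hζ : IsPrimitiveRoot ζ n) (k : ℕ) :
    ∑ j ∈ Finset.range n, (ζ ^ k) ^ j = if n ∣ k then (n : R) else 0 := by
  split_ifs with hk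
  · simp [(hζ.pow_eq_one_iff_dvd k).2 hk]
  · have hne : ζ ^ k - 1 ≠ 0 := sub_ne_zero.2 fun h => hk ((hζ.pow_eq_one_iff_dvd k).1 h)
    have hmul : (∑ j ∈ Finset.range n, (ζ ^ k) ^ j) * (ζ ^ k - 1) = 0 := by
      rw [geom_sum_mul, pow_right_comm, hζ.pow_eq_one, one_pow, sub_self]
    exact (mul_eq_zero.1 hmul).resolve_right hne

theorem hasSum_coeff_mul_of_hasSum_rotations {𝕜 : Type*} [NormedField 𝕜] [CharZero 𝕜]
    {a : ℕ → 𝕜} {f : 𝕜 → 𝕜} {ζ z : 𝕜} {n : ℕ} (hn : 0 < n) (hζ : IsPrimitiveRoot ζ n)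
    (hsum : ∀ j < n, HasSum (fun k => a k * (ζ ^ j * z) ^ k) (f (ζ ^ j * z))) :
    HasSum (fun m => a (n * m) * (z ^ n) ^ m) ((∑ j ∈ Finset.range n, f (ζ ^ j * z)) / n) := by
  have hn' : (n : 𝕜) ≠ 0 := Nat.cast_ne_zero.2 hn.ne'
  have hterm : ∀ k, (∑ j ∈ Finset.range n, a k * (ζ ^ j * z) ^ k) / n =
      if n ∣ k then a k * z ^ k else 0 := fun k => by
    have hrot : ∀ j, a k * (ζ ^ j * z) ^ k = a k * z ^ k * (ζ ^ k) ^ j := fun j => by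
      rw [mul_pow, pow_right_comm]
      ring
    simp only [hrot, ← Finset.mul_sum, hζ.geom_sum_pow_eq_ite]
    split_ifs
    · field_simp
    · simp
  have hsieved : HasSum (fun k => if n ∣ k then a k * z ^ k else 0)
      ((∑ j ∈ Finset.range n, f (ζ ^ j * z)) / n) := by
    simpa only [hterm] using
      (hasSum_sum fun j hj => hsum j (Finset.mem_range.1 hj)).div_const (n : 𝕜)
  refine ((mul_right_injective₀ hn.ne').hasSum_iff fun k hk => ?_).2 hsieved |>.congr_fun ?_
  · rw [if_neg fun ⟨m, hm⟩ => hk ⟨m, hm.symm⟩]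
  · intro m
    simp [pow_mul]

theorem exists_mapsTo_ball_hasSum_coeff_mul {a : ℕ → ℂ} {f : ℂ → ℂ}
    (hsum : ∀ z ∈ ball (0 : ℂ) 1, HasSum (fun n => a n * z ^ n) (f z))
    (hb : ∀ z ∈ ball (0 : ℂ) 1, ‖f z‖ < 1) {n : ℕ} (hn : 0 < n) :
    ∃ H : ℂ → ℂ, (∀ w ∈ ball (0 : ℂ) 1, HasSum (fun m => a (n * m) * w ^ m) (H w)) ∧
      MapsTo H (ball 0 1) (ball 0 1) := by
  obtain ⟨ζ, hζ⟩ : ∃ ζ : ℂ, IsPrimitiveRoot ζ n := ⟨_, Complex.isPrimitiveRoot_exp n hn.ne'⟩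
  have hrot : ∀ z ∈ ball (0 : ℂ) 1, ∀ j : ℕ, ζ ^ j * z ∈ ball (0 : ℂ) 1 := fun z hz j => by
    simpa [norm_mul, hζ.norm'_eq_one hn.ne'] using hz
  have hroot : ∀ w ∈ ball (0 : ℂ) 1, ∃ z ∈ ball (0 : ℂ) 1, z ^ n = w := fun w hw => by
    obtain ⟨z, rfl⟩ := IsAlgClosed.exists_pow_nat_eq w hn
    refine ⟨z, ?_, rfl⟩
    simpa [norm_pow, pow_lt_one_iff_of_nonneg (norm_nonneg z) hn.ne'] using hw
  set avg : ℂ → ℂ := fun z => (∑ j ∈ Finset.range n, f (ζ ^ j * z)) / n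
  have hsieve : ∀ z ∈ ball (0 : ℂ) 1, HasSum (fun m => a (n * m) * (z ^ n) ^ m) (avg z) :=
    fun z hz => hasSum_coeff_mul_of_hasSum_rotations hn hζ fun j _ => hsum _ (hrot z hz j)
  have havg : ∀ z ∈ ball (0 : ℂ) 1, ‖avg z‖ < 1 := fun z hz => by
    rw [norm_div, Complex.norm_natCast, div_lt_one (Nat.cast_pos.2 hn)]
    calc ‖∑ j ∈ Finset.range n, f (ζ ^ j * z)‖
        ≤ ∑ j ∈ Finset.range n, ‖f (ζ ^ j * z)‖ := norm_sum_le _ _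
      _ < ∑ _j ∈ Finset.range n, 1 :=
        Finset.sum_lt_sum_of_nonempty (Finset.nonempty_range_iff.2 hn.ne')
          fun j _ => hb _ (hrot z hz j)
      _ = n := by simp
  refine ⟨fun w => ∑' m, a (n * m) * w ^ m, fun w hw => ?_, fun w hw => ?_⟩
  · obtain ⟨z, hz, rfl⟩ := hroot w hw
    exact (hsieve z hz).summable.hasSum
  · obtain ⟨z, hz, rfl⟩ := hroot w hw
    simpa [(hsieve z hz).tsum_eq] using havg z hz

theorem norm_coeff_le_one_sub_sq {a : ℕ → ℂ} {f : ℂ → ℂ}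
    (hsum : ∀ z ∈ ball (0 : ℂ) 1, HasSum (fun n => a n * z ^ n) (f z))
    (hb : ∀ z ∈ ball (0 : ℂ) 1, ‖f z‖ < 1) {n : ℕ} (hn : 0 < n) :
    ‖a n‖ ≤ 1 - ‖a 0‖ ^ 2 := by
  obtain ⟨H, hH_sum, hH_maps⟩ := exists_mapsTo_ball_hasSum_coeff_mul hsum hb hn
  have hH : HasFPowerSeriesOnBall H (ofScalars ℂ fun m => a (n * m)) 0 (1 : ℝ≥0) :=
    hasFPowerSeriesOnBall_ofScalars_of_hasSum one_pos (by simpa using hH_sum)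
  have hH_diff : DifferentiableOn ℂ H (ball 0 1) := by
    simpa only [eball_coe, NNReal.coe_one] using hH.differentiableOn
  have hH_zero : H 0 = a 0 := by simpa using (hH.coeff_zero fun _ => 0).symm
  have hH_deriv : deriv H 0 = a n := by simpa using hH.hasFPowerSeriesAt.deriv
  simpa [hH_zero, hH_deriv] using
    Complex.norm_deriv_le_one_sub_sq_of_mapsTo_ball hH_diff hH_maps

theorem tsum_mul_pow_le_of_le {c : ℕ → ℝ} {r B : ℝ} (hr0 : 0 ≤ r) (hr1 : r < 1)
    (hc : Summable fun n => c n * r ^ n) (hB : ∀ n, 0 < n → c n ≤ B) :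
    ∑' n, c n * r ^ n ≤ c 0 + B * r / (1 - r) := by
  have hgeom : HasSum (fun n => B * r ^ (n + 1)) (B * r / (1 - r)) := by
    simpa [div_eq_mul_inv, pow_succ', mul_assoc] using
      (hasSum_geometric_of_lt_one hr0 hr1).mul_left (B * r)
  rw [hc.tsum_eq_zero_add, pow_zero, mul_one]
  gcongr
  refine ((summable_nat_add_iff 1).2 hc).tsum_le_tsum (fun n => ?_) hgeom.summable |>.trans_eq
    hgeom.tsum_eq
  gcongr
  exact hB _ n.succ_pos

theorem bohr_classical_general (a : ℕ → ℂ) (f : ℂ → ℂ)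
    (hsum : ∀ z ∈ Metric.ball (0 : ℂ) 1, HasSum (fun n : ℕ => a n * z ^ n) (f z))
    (hb : ∀ z ∈ Metric.ball (0 : ℂ) 1, ‖f z‖ < 1) :
    ∑' n : ℕ, ‖a n‖ * (1 / 3 : ℝ) ^ n ≤ 1 := by
  have hf : HasFPowerSeriesOnBall f (ofScalars ℂ a) 0 (1 : ℝ≥0) :=
    hasFPowerSeriesOnBall_ofScalars_of_hasSum one_pos (by simpa using hsum)
  have hsummable : Summable fun n => ‖a n‖ * (1 / 3 : ℝ) ^ n := by
    have h := (ofScalars ℂ a).summable_norm_mul_pow (r := 3⁻¹)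
      (lt_of_lt_of_le (by norm_num) hf.r_le)
    simpa [ofScalars_norm] using h
  have ha0 : ‖a 0‖ < 1 := by
    simpa [← hf.coeff_zero fun _ => 0] using hb 0 (mem_ball_self one_pos)
  calc ∑' n, ‖a n‖ * (1 / 3 : ℝ) ^ n
      ≤ ‖a 0‖ + (1 - ‖a 0‖ ^ 2) * (1 / 3) / (1 - 1 / 3) :=
        tsum_mul_pow_le_of_le (by norm_num) (by norm_num) hsummable
          fun n hn => norm_coeff_le_one_sub_sq hsum hb hn
    _ ≤ 1 := by
      norm_num
      nlinarith [sq_nonneg (1 - ‖a 0‖)]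

/-- Bohr's classical theorem: if `f(z) = Σ aₙ zⁿ` is holomorphic on the unit disc
with `|f| < 1` there, then `Σ |aₙ| (1/3)ⁿ ≤ 1`. -/
theorem bohr_classical (a : ℕ → ℂ) (f : ℂ → ℂ)
    (hf : DifferentiableOn ℂ f (Metric.ball (0 : ℂ) 1))
    (hsum : ∀ z ∈ Metric.ball (0 : ℂ) 1, HasSum (fun n : ℕ => a n * z ^ n) (f z))
    (hb : ∀ z ∈ Metric.ball (0 : ℂ) 1, ‖f z‖ < 1) :
    ∑' n : ℕ, ‖a n‖ * (1 / 3 : ℝ) ^ n ≤ 1 :=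
  bohr_classical_general a f hsum hb
end

section
/- Let 1 < R and let f be holomorphic on the annulus A = {w ∈ ℂ : 1 < |w| < R} with Laurent expansion f(w) = a_0 + Σ_{n≥1} a_n (w^n + w^{-n}). If Re(f(w)) > 0 for all w ∈ A, then for every n ≥ 1, |a_n| ≤ 2 Re(a_0) / (R^n − R^{-n}). -/
/-!
On a circle `|w| = r` with `1 < r < R` the series converges absolutely (compare with a larger
circle), so it may be integrated termwise: writing it as `∑_{j ∈ ℤ} a_{|j|} w ^ j`, the `k`-th
Fourier coefficient of `θ ↦ f (r e^{iθ})` is `a_{|k|} r ^ k`. The `n`-th Fourier coefficient of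
`Re f` is therefore `(a_n r ^ n + conj a_n r ^ (-n)) / 2`, and since `Re f ≥ 0` it is bounded
in modulus by the mean of `Re f`, which is `Re a_0`. This gives
`|a_n| (r ^ n - r ^ (-n)) ≤ 2 Re a_0`; let `r → R`.
-/

open Complex Real Set Filter Topology MeasureTheory
open scoped ComplexConjugate

theorem integral_exp_int_mul_I (k : ℤ) :
    ∫ θ in (0 : ℝ)..2 * π, exp (k * θ * I) = if k = 0 then (2 * π : ℂ) else 0 := by
  split_ifs with hk
  · simp [hk]
  · have hkI : (k : ℂ) * I ≠ 0 := by simp [hk]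
    simp_rw [mul_comm (k : ℂ) _, mul_assoc, mul_comm _ (k * I)]
    rw [integral_exp_mul_complex hkI]
    have : exp (k * I * (2 * π)) = 1 := by
      rw [← exp_int_mul_two_pi_mul_I k]; ring_nf
    simp [this]

theorem integral_circleMap_zpow_mul_exp (r : ℝ) (j k : ℤ) :
    ∫ θ in (0 : ℝ)..2 * π, circleMap 0 r θ ^ j * exp (-(k * θ * I)) =
      if j = k then 2 * π * (r : ℂ) ^ j else 0 := by
  have hexp : ∀ θ : ℝ, circleMap 0 r θ ^ j * exp (-(k * θ * I)) =
      (r : ℂ) ^ j * exp (((j - k : ℤ) : ℂ) * θ * I) := by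
    intro θ
    rw [circleMap_zero, mul_zpow, ← exp_int_mul, mul_assoc, ← Complex.exp_add]
    push_cast; ring_nf
  simp_rw [hexp, intervalIntegral.integral_const_mul, integral_exp_int_mul_I, sub_eq_zero]
  split_ifs <;> ring

theorem continuous_of_hasSum_zpow_circleMap {c : ℤ → ℂ} {r : ℝ} {F : ℝ → ℂ}
    (hc : Summable fun j ↦ ‖c j * (r : ℂ) ^ j‖)
    (hF : ∀ θ, HasSum (fun j ↦ c j * circleMap 0 r θ ^ j) (F θ)) : Continuous F := by
  have : F = fun θ ↦ ∑' j, c j * circleMap 0 r θ ^ j := funext fun θ ↦ (hF θ).tsum_eq.symm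
  rw [this]
  refine continuous_tsum (fun j ↦ ?_) hc fun j θ ↦ by simp [norm_circleMap_zero]
  simp_rw [circleMap_zero_zpow]
  fun_prop

theorem integral_mul_exp_of_hasSum_zpow_circleMap {c : ℤ → ℂ} {r : ℝ} {F : ℝ → ℂ}
    (hc : Summable fun j ↦ ‖c j * (r : ℂ) ^ j‖)
    (hF : ∀ θ, HasSum (fun j ↦ c j * circleMap 0 r θ ^ j) (F θ)) (k : ℤ) :
    ∫ θ in (0 : ℝ)..2 * π, F θ * exp (-(k * θ * I)) = 2 * π * c k * (r : ℂ) ^ k := by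
  have hterms : HasSum
      (fun j ↦ ∫ θ in (0 : ℝ)..2 * π, c j * circleMap 0 r θ ^ j * exp (-(k * θ * I)))
      (∫ θ in (0 : ℝ)..2 * π, F θ * exp (-(k * θ * I))) := by
    refine intervalIntegral.hasSum_integral_of_dominated_convergence
      (fun j _ ↦ ‖c j * (r : ℂ) ^ j‖) (fun j ↦ ?_) (fun j ↦ ae_of_all _ fun θ _ ↦ ?_)
      (ae_of_all _ fun _ _ ↦ hc) intervalIntegrable_const (ae_of_all _ fun θ _ ↦ (hF θ).mul_right _)
    · simp_rw [circleMap_zero_zpow]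
      exact Continuous.aestronglyMeasurable (by fun_prop)
    · simp [norm_exp]
  refine hterms.unique ?_
  simp_rw [mul_assoc (c _), intervalIntegral.integral_const_mul,
    integral_circleMap_zpow_mul_exp, mul_ite, mul_zero]
  convert hasSum_ite_eq k (2 * π * c k * (r : ℂ) ^ k) using 2 with j
  split_ifs with h
  · subst h; ring
  · rfl

theorem norm_integral_mul_exp_add_conj_le {S : ℝ → ℂ}
    (hS : IntervalIntegrable S volume 0 (2 * π)) (hre : ∀ θ, 0 ≤ (S θ).re) (k : ℤ) :
    ‖(∫ θ in (0 : ℝ)..2 * π, S θ * exp (-(k * θ * I))) +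
        conj (∫ θ in (0 : ℝ)..2 * π, S θ * exp (k * θ * I))‖ ≤
      2 * (∫ θ in (0 : ℝ)..2 * π, S θ).re := by
  have hre_mul : ∀ θ : ℝ, ((S θ).re : ℂ) * exp (-(k * θ * I)) =
      (S θ * exp (-(k * θ * I)) + conj (S θ * exp (k * θ * I))) / 2 := by
    intro θ
    rw [map_mul, ← exp_conj, re_eq_add_conj]
    simp only [map_mul, map_intCast, conj_ofReal, conj_I]
    ring_nf
  have hint : ∀ z : ℂ, IntervalIntegrable (fun θ : ℝ ↦ S θ * exp (z * θ * I)) volume 0 (2 * π) :=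
    fun z ↦ hS.mul_continuousOn (by fun_prop)
  have hint_conj :
      IntervalIntegrable (fun θ : ℝ ↦ conj (S θ * exp (k * θ * I))) volume 0 (2 * π) := by
    have := hint k
    rw [intervalIntegrable_iff] at this ⊢
    exact conjCLE.toContinuousLinearMap.integrable_comp this
  have hint_neg := hint (-k)
  simp only [neg_mul] at hint_neg
  calc _ = 2 * ‖∫ θ in (0 : ℝ)..2 * π, ((S θ).re : ℂ) * exp (-(k * θ * I))‖ := by
        simp_rw [hre_mul, intervalIntegral.integral_div,
          intervalIntegral.integral_add hint_neg hint_conj,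
          intervalIntegral.intervalIntegral_conj]
        rw [norm_div, Complex.norm_two]; ring
    _ ≤ 2 * ∫ θ in (0 : ℝ)..2 * π, (S θ).re := by
        gcongr
        refine (intervalIntegral.norm_integral_le_integral_norm (by positivity)).trans_eq ?_
        congr 1 with θ
        simp [norm_exp, abs_of_nonneg (hre θ)]
    _ = 2 * (∫ θ in (0 : ℝ)..2 * π, S θ).re := by
        rw [← RCLike.re_to_complex, ← intervalIntegral.intervalIntegral_re hS]; rfl

theorem summable_norm_mul_pow_of_summable_pow_add_inv_pow {a : ℕ → ℂ} {r s : ℝ}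
    (hr : 0 ≤ r) (hrs : r < s)
    (hs : Summable fun n ↦ a (n + 1) * ((s : ℂ) ^ (n + 1) + (s : ℂ)⁻¹ ^ (n + 1))) :
    Summable fun n ↦ ‖a (n + 1)‖ * r ^ (n + 1) := by
  have hs0 : 0 < s := hr.trans_lt hrs
  obtain ⟨C, hC⟩ := hs.tendsto_atTop_zero.norm.bddAbove_range
  have hbound : ∀ n, ‖a (n + 1)‖ * r ^ (n + 1) ≤ C * (r / s) ^ (n + 1) := fun n ↦ calc
    ‖a (n + 1)‖ * r ^ (n + 1) = ‖a (n + 1)‖ * s ^ (n + 1) * (r / s) ^ (n + 1) := by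
      rw [mul_assoc, ← mul_pow, mul_div_cancel₀ r hs0.ne']
    _ ≤ ‖a (n + 1)‖ * (s ^ (n + 1) + (s ^ (n + 1))⁻¹) * (r / s) ^ (n + 1) := by
      gcongr; exact le_add_of_nonneg_right (by positivity)
    _ = ‖a (n + 1) * ((s : ℂ) ^ (n + 1) + (s : ℂ)⁻¹ ^ (n + 1))‖ * (r / s) ^ (n + 1) := by
      rw [norm_mul, ← inv_pow]; norm_cast
      rw [Real.norm_of_nonneg (by positivity)]
    _ ≤ C * (r / s) ^ (n + 1) := by gcongr; exact hC ⟨n, rfl⟩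
  refine .of_nonneg_of_le (fun n ↦ by positivity) hbound (.mul_left C ?_)
  exact (summable_nat_add_iff 1).2
    (summable_geometric_of_lt_one (by positivity) ((div_lt_one hs0).2 hrs))

theorem norm_mul_inv_pow_le {w : ℂ} (hw : 1 ≤ ‖w‖) (c : ℂ) (n : ℕ) :
    ‖c * w⁻¹ ^ n‖ ≤ ‖c‖ * ‖w‖ ^ n := by
  rw [norm_mul, norm_pow, norm_inv]
  gcongr
  exact (inv_le_one_of_one_le₀ hw).trans hw

theorem summable_norm_natAbs_zpow {a : ℕ → ℂ} {w : ℂ} (hw : 1 ≤ ‖w‖)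
    (habs : Summable fun n ↦ ‖a (n + 1)‖ * ‖w‖ ^ (n + 1)) :
    Summable fun j : ℤ ↦ ‖a j.natAbs * w ^ j‖ := by
  refine .of_add_one_of_neg_add_one ?_ ?_
  · simpa only [← Nat.cast_add_one, Int.natAbs_natCast, zpow_natCast, norm_mul, norm_pow]
      using habs
  · simp only [← Nat.cast_add_one, Int.natAbs_neg, Int.natAbs_natCast, zpow_neg, zpow_natCast,
      ← inv_pow]
    exact habs.of_nonneg_of_le (fun _ ↦ norm_nonneg _) fun n ↦ norm_mul_inv_pow_le hw _ _

theorem hasSum_natAbs_zpow {a : ℕ → ℂ} {w s : ℂ} (hw : 1 ≤ ‖w‖)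
    (habs : Summable fun n ↦ ‖a (n + 1)‖ * ‖w‖ ^ (n + 1))
    (h : HasSum (fun n ↦ a (n + 1) * (w ^ (n + 1) + w⁻¹ ^ (n + 1))) s) :
    HasSum (fun j : ℤ ↦ a j.natAbs * w ^ j) (a 0 + s) := by
  have hpos : Summable fun n ↦ a (n + 1) * w ^ (n + 1) :=
    .of_norm (by simpa only [norm_mul, norm_pow] using habs)
  have hneg : Summable fun n ↦ a (n + 1) * w⁻¹ ^ (n + 1) :=
    .of_norm_bounded habs fun n ↦ norm_mul_inv_pow_le hw _ _
  have hs : (∑' n, a (n + 1) * w ^ (n + 1)) + ∑' n, a (n + 1) * w⁻¹ ^ (n + 1) = s :=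
    (hpos.hasSum.add hneg.hasSum).unique (by simpa only [mul_add] using h)
  have hint := HasSum.of_add_one_of_neg_add_one (f := fun j : ℤ ↦ a j.natAbs * w ^ j)
    (by simpa only [← Nat.cast_add_one, Int.natAbs_natCast, zpow_natCast] using hpos.hasSum)
    (by simpa only [← Nat.cast_add_one, Int.natAbs_neg, Int.natAbs_natCast, zpow_neg,
      zpow_natCast, ← inv_pow] using hneg.hasSum)
  convert hint using 1
  rw [← hs]
  simp only [Int.natAbs_zero, zpow_zero, mul_one]
  ring

theorem norm_mul_pow_sub_inv_le_two_re {a : ℕ → ℂ} {f : ℂ → ℂ} {r : ℝ} (hr : 1 ≤ r)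
    (habs : Summable fun n ↦ ‖a (n + 1)‖ * r ^ (n + 1))
    (hf : ∀ w : ℂ, ‖w‖ = r →
      HasSum (fun n ↦ a (n + 1) * (w ^ (n + 1) + w⁻¹ ^ (n + 1))) (f w - a 0))
    (hre : ∀ w : ℂ, ‖w‖ = r → 0 ≤ (f w).re) (n : ℕ) :
    ‖a n‖ * (r ^ n - (r ^ n)⁻¹) ≤ 2 * (a 0).re := by
  have hr0 : 0 ≤ r := zero_le_one.trans hr
  have hnorm : ∀ θ, ‖circleMap 0 r θ‖ = r := by simp [norm_circleMap_zero, abs_of_nonneg hr0]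
  have hS : ∀ θ, HasSum (fun j : ℤ ↦ a j.natAbs * circleMap 0 r θ ^ j) (f (circleMap 0 r θ)) :=
    fun θ ↦ by
      simpa using hasSum_natAbs_zpow (by rwa [hnorm]) (by rwa [hnorm]) (hf _ (hnorm θ))
  have hc : Summable fun j : ℤ ↦ ‖a j.natAbs * (r : ℂ) ^ j‖ :=
    summable_norm_natAbs_zpow (by rwa [Complex.norm_of_nonneg hr0])
      (by rwa [Complex.norm_of_nonneg hr0])
  have hcoeff := integral_mul_exp_of_hasSum_zpow_circleMap hc hS
  have hbound := norm_integral_mul_exp_add_conj_le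
    ((continuous_of_hasSum_zpow_circleMap hc hS).intervalIntegrable 0 (2 * π))
    (fun θ ↦ hre _ (hnorm θ)) n
  have h0 := hcoeff 0
  have hpos := hcoeff n
  have hneg := hcoeff (-n)
  simp only [Int.cast_zero, zero_mul, neg_zero, Complex.exp_zero, mul_one, Int.natAbs_zero,
    zpow_zero] at h0
  simp only [Int.cast_natCast, Int.natAbs_natCast, zpow_natCast] at hpos hbound
  simp only [Int.cast_neg, Int.cast_natCast, neg_mul, neg_neg, Int.natAbs_neg,
    Int.natAbs_natCast, zpow_neg, zpow_natCast] at hneg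
  rw [hpos, hneg, h0] at hbound
  refine le_of_mul_le_mul_left ?_ (by positivity : (0 : ℝ) < 2 * π)
  calc 2 * π * (‖a n‖ * (r ^ n - (r ^ n)⁻¹))
      = ‖2 * π * a n * (r : ℂ) ^ n‖ - ‖conj (2 * π * a n * ((r : ℂ) ^ n)⁻¹)‖ := by
        simp only [RCLike.norm_conj, norm_mul, norm_inv, norm_pow, Complex.norm_of_nonneg hr0,
          Complex.norm_of_nonneg pi_pos.le, Complex.norm_two]
        ring
    _ ≤ _ := norm_sub_le_norm_add _ _
    _ ≤ _ := hbound
    _ = 2 * π * (2 * (a 0).re) := by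
      rw [show (2 * π : ℂ) = ((2 * π : ℝ) : ℂ) by push_cast; ring, re_ofReal_mul]
      ring

/-- Carathéodory-type inequality on the annulus {1 < |w| < R} for a symmetric Laurent
series `f(w) = a₀ + Σ_{n≥1} aₙ (wⁿ + w⁻ⁿ)` with positive real part. -/
theorem caratheodory_annulus (R : ℝ) (hR : 1 < R) (a : ℕ → ℂ) (f : ℂ → ℂ)
    (hf : ∀ w : ℂ, 1 < ‖w‖ → ‖w‖ < R →
      HasSum (fun n : ℕ => a (n + 1) * (w ^ (n + 1) + (w⁻¹) ^ (n + 1))) (f w - a 0))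
    (hre : ∀ w : ℂ, 1 < ‖w‖ → ‖w‖ < R → 0 < (f w).re) :
    ∀ n : ℕ, 1 ≤ n → ‖a n‖ ≤ 2 * (a 0).re / (R ^ n - (R ^ n)⁻¹) := by
  intro n hn
  have hRn : 1 < R ^ n := one_lt_pow₀ hR (by omega)
  rw [le_div_iff₀ (sub_pos.2 ((inv_lt_one_of_one_lt₀ hRn).trans hRn))]
  have hcircle : ∀ r ∈ Ioo 1 R, ‖a n‖ * (r ^ n - (r ^ n)⁻¹) ≤ 2 * (a 0).re := by
    rintro r ⟨hr1, hrR⟩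
    have hs : ‖(((r + R) / 2 : ℝ) : ℂ)‖ = (r + R) / 2 := Complex.norm_of_nonneg (by linarith)
    refine norm_mul_pow_sub_inv_le_two_re hr1.le
      (summable_norm_mul_pow_of_summable_pow_add_inv_pow (by linarith) (by linarith)
        (hf _ (by rw [hs]; linarith) (by rw [hs]; linarith)).summable)
      (fun w hw ↦ hf w (hw ▸ hr1) (hw ▸ hrR))
      (fun w hw ↦ (hre w (hw ▸ hr1) (hw ▸ hrR)).le) n
  have hcont : ContinuousAt (fun r : ℝ ↦ ‖a n‖ * (r ^ n - (r ^ n)⁻¹)) R := by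
    fun_prop (disch := positivity)
  refine le_of_tendsto (hcont.continuousWithinAt (s := Iio R)).tendsto ?_
  filter_upwards [Ioo_mem_nhdsLT hR] with r hr using hcircle r hr
end

section
/- Let 1 < R and let f be holomorphic on the annulus A = {1 < |w| < R} with Laurent expansion f(w) = a_0 + Σ_{n≥1} a_n (w^n + w^{-n}). If |f(w)| < 1 on A and a_0 is real with a_0 > 0, then for every n ≥ 1, |a_n| ≤ 2(1 − a_0)/(R^n − R^{-n}). -/
/-!
Fix `1 < r < R`. On the circle `|w| = r` the symmetric Laurent series converges absolutely
(compare with its terms at a point of `(r, R)`), so `θ ↦ f (r e^{iθ})` has Fourier coefficients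
`a₀`, `aₙ rⁿ` and `aₙ r⁻ⁿ` at `0`, `n` and `-n`. Since `|f| < 1`, the function `1 - Re f` is
nonnegative on the circle, so the norm of its `n`-th Fourier coefficient,
`(aₙ rⁿ + conj aₙ r⁻ⁿ) / 2`, is at most its mean `1 - Re a₀`. Hence
`‖aₙ‖ (rⁿ - r⁻ⁿ) ≤ 2 (1 - Re a₀)`, and `r → R` gives the bound.
-/

open Complex ComplexConjugate MeasureTheory Real Filter Topology Set

section FourierCoeffOn

variable {a b : ℝ} (hab : a < b) {E : Type*} [NormedAddCommGroup E] [NormedSpace ℂ E]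

lemma continuous_fourier_coe {T : ℝ} (n : ℤ) :
    Continuous fun x : ℝ => fourier n (x : AddCircle T) :=
  (fourier n).continuous.comp (AddCircle.continuous_mk' T)

lemma norm_fourier_coe {T : ℝ} (n : ℤ) (x : ℝ) : ‖fourier n (x : AddCircle T)‖ = 1 :=
  Circle.norm_coe _

lemma fourierCoeffOn_add {f g : ℝ → E} (hf : Continuous f) (hg : Continuous g) (n : ℤ) :
    fourierCoeffOn hab (f + g) n = fourierCoeffOn hab f n + fourierCoeffOn hab g n := by
  have hfi : IntervalIntegrable (fun x => fourier (-n) (x : AddCircle (b - a)) • f x)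
      volume a b :=
    ((continuous_fourier_coe _).smul hf).intervalIntegrable _ _
  have hgi : IntervalIntegrable (fun x => fourier (-n) (x : AddCircle (b - a)) • g x)
      volume a b :=
    ((continuous_fourier_coe _).smul hg).intervalIntegrable _ _
  simp only [fourierCoeffOn_eq_integral, Pi.add_apply, smul_add,
    intervalIntegral.integral_add hfi hgi]

lemma fourierCoeffOn_const_one (n : ℤ) :
    fourierCoeffOn hab (fun _ => (1 : ℂ)) n = if n = 0 then 1 else 0 := by
  split_ifs with hn
  · have hba : (b : ℂ) - a ≠ 0 := sub_ne_zero.2 (ofReal_injective.ne hab.ne')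
    simp [fourierCoeffOn_eq_integral, hn, hba]
  · rw [fourierCoeffOn_of_hasDerivAt hab hn (f' := fun _ => 0) (fun x _ => hasDerivAt_const x _)
      intervalIntegrable_const]
    simp [fourierCoeffOn_eq_integral]

lemma fourierCoeffOn_fourier (j n : ℤ) :
    fourierCoeffOn hab (fun x => fourier j (x : AddCircle (b - a))) n =
      if n = j then 1 else 0 := by
  simp_rw [← sub_eq_zero (a := n), ← fourierCoeffOn_const_one hab, fourierCoeffOn_eq_integral]
  congr 2
  funext x
  rw [smul_eq_mul, smul_eq_mul, mul_one, ← fourier_add]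
  congr 2
  ring

lemma fourierCoeffOn_conj (F : ℝ → ℂ) (n : ℤ) :
    fourierCoeffOn hab (fun x => conj (F x)) n = conj (fourierCoeffOn hab F (-n)) := by
  simp only [fourierCoeffOn_eq_integral, neg_neg, intervalIntegral.integral_of_le hab.le,
    smul_eq_mul, Complex.real_smul, map_mul, ← integral_conj, fourier_neg, conj_ofReal]

lemma hasSum_fourierCoeffOn {ι : Type*} [Countable ι] {F : ι → ℝ → E} {f : ℝ → E} {u : ι → ℝ}
    (hF : ∀ i, Continuous (F i)) (hu : Summable u) (hFu : ∀ i x, ‖F i x‖ ≤ u i)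
    (hFf : ∀ x, HasSum (fun i => F i x) (f x)) (n : ℤ) :
    HasSum (fun i => fourierCoeffOn hab (F i) n) (fourierCoeffOn hab f n) := by
  simp only [fourierCoeffOn_eq_integral]
  refine (intervalIntegral.hasSum_integral_of_dominated_convergence (fun i _ => u i)
    (fun i => ((continuous_fourier_coe _).smul (hF i)).aestronglyMeasurable)
    (fun i => .of_forall fun x _ => ?_) (.of_forall fun _ _ => hu) intervalIntegrable_const
    (.of_forall fun x _ => (hFf x).const_smul _)).const_smul _
  change ‖fourier (-n) (x : AddCircle (b - a)) • F i x‖ ≤ u i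
  rw [norm_smul, norm_fourier_coe, one_mul]
  exact hFu i x

lemma norm_fourierCoeffOn_le_of_nonneg {u : ℝ → ℝ} (hu : ∀ x, 0 ≤ u x) (n : ℤ) :
    ‖fourierCoeffOn hab (fun x => (u x : ℂ)) n‖ ≤
      (fourierCoeffOn hab (fun x => (u x : ℂ)) 0).re := by
  have hnorm : ∀ x : ℝ, ‖fourier (-n) (x : AddCircle (b - a)) • (u x : ℂ)‖ = u x := by
    intro x
    rw [norm_smul, norm_fourier_coe, one_mul, norm_real, Real.norm_of_nonneg (hu x)]
  simp only [fourierCoeffOn_eq_integral, neg_zero, fourier_zero, one_smul,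
    intervalIntegral.integral_ofReal, Complex.real_smul, re_ofReal_mul, ofReal_re, norm_mul,
    norm_real, Real.norm_of_nonneg (one_div_pos.2 (sub_pos.2 hab)).le]
  gcongr
  calc _ ≤ _ := intervalIntegral.norm_integral_le_integral_norm hab.le
    _ = _ := by simp only [hnorm]

lemma norm_fourierCoeffOn_add_conj_le {F : ℝ → ℂ} (hF : Continuous F)
    (hF1 : ∀ x, (F x).re ≤ 1) {n : ℤ} (hn : n ≠ 0) :
    ‖fourierCoeffOn hab F n + conj (fourierCoeffOn hab F (-n))‖ ≤
      2 * (1 - (fourierCoeffOn hab F 0).re) := by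
  set c := fourierCoeffOn hab F
  have hU : (fun x => ((1 - (F x).re : ℝ) : ℂ)) =
      (fun _ => 1) + (-(1 / 2) : ℂ) • (F + fun x => conj (F x)) := by
    funext x
    simp only [Pi.add_apply, Pi.smul_apply, smul_eq_mul, ofReal_sub, ofReal_one, re_eq_add_conj]
    ring
  have hcoeff : ∀ m, fourierCoeffOn hab (fun x => ((1 - (F x).re : ℝ) : ℂ)) m =
      (if m = 0 then 1 else 0) - (c m + conj (c (-m))) / 2 := fun m => by
    have hFc : Continuous fun x => conj (F x) := continuous_conj.comp hF
    rw [hU, fourierCoeffOn_add hab (g := (-(1 / 2) : ℂ) • (F + fun x => conj (F x)))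
        continuous_const ((hF.add hFc).const_smul _),
      fourierCoeffOn.const_smul, fourierCoeffOn_add hab hF hFc,
      fourierCoeffOn_conj, fourierCoeffOn_const_one, smul_eq_mul]
    ring
  have key := norm_fourierCoeffOn_le_of_nonneg hab (fun x => sub_nonneg.2 (hF1 x)) n
  rw [hcoeff, hcoeff, neg_zero, add_conj, if_neg hn, if_pos rfl, zero_sub, norm_neg,
    norm_div, RCLike.norm_ofNat] at key
  simp only [sub_re, one_re, div_ofNat_re, ofReal_re] at key
  linarith

end FourierCoeffOn

section LaurentOnCircle

variable {c : ℤ → ℂ} {F : ℝ → ℂ} {r : ℝ}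

lemma fourierCoeffOn_circleMap_zpow (j n : ℤ) :
    fourierCoeffOn two_pi_pos (fun θ => circleMap 0 r θ ^ j) n =
      if n = j then (r : ℂ) ^ j else 0 := by
  -- `fourierCoeffOn two_pi_pos` works on `AddCircle (2 * π - 0)`
  have h : (fun θ => circleMap 0 r θ ^ j) =
      fun θ : ℝ => (r : ℂ) ^ j * fourier j (θ : AddCircle (2 * π - 0)) := by
    funext θ
    rw [fourier_coe_apply, circleMap_zero_zpow, circleMap_zero]
    push_cast
    congr 2
    field_simp
    ring
  rw [h, fourierCoeffOn.const_mul, fourierCoeffOn_fourier, mul_ite, mul_one, mul_zero]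

lemma continuous_circleMap_zpow (hr : r ≠ 0) (m : ℤ) :
    Continuous fun θ => circleMap 0 r θ ^ m :=
  (continuous_circleMap 0 r).zpow₀ m fun _ => .inl (circleMap_ne_center hr)

lemma norm_mul_circleMap_zpow (hr : 0 < r) (m : ℤ) (θ : ℝ) :
    ‖c m * circleMap 0 r θ ^ m‖ = ‖c m‖ * r ^ m := by
  rw [norm_mul, norm_zpow, norm_circleMap_zero, abs_of_pos hr]

lemma continuous_of_hasSum_circleMap_zpow (hr : 0 < r) (hc : Summable fun m => ‖c m‖ * r ^ m)
    (hF : ∀ θ, HasSum (fun m => c m * circleMap 0 r θ ^ m) (F θ)) : Continuous F := by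
  simp_rw [← funext fun θ => (hF θ).tsum_eq]
  exact continuous_tsum (fun m => continuous_const.mul (continuous_circleMap_zpow hr.ne' m)) hc
    fun m θ => (norm_mul_circleMap_zpow hr m θ).le

lemma fourierCoeffOn_of_hasSum_circleMap_zpow (hr : 0 < r)
    (hc : Summable fun m => ‖c m‖ * r ^ m)
    (hF : ∀ θ, HasSum (fun m => c m * circleMap 0 r θ ^ m) (F θ)) (n : ℤ) :
    fourierCoeffOn two_pi_pos F n = c n * r ^ n := by
  have h := hasSum_fourierCoeffOn two_pi_pos (F := fun m θ => c m * circleMap 0 r θ ^ m)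
    (fun m => continuous_const.mul (continuous_circleMap_zpow hr.ne' m)) hc
    (fun m θ => (norm_mul_circleMap_zpow hr m θ).le) hF n
  simp only [fourierCoeffOn.const_mul, fourierCoeffOn_circleMap_zpow, mul_ite, mul_zero] at h
  exact h.unique (by simpa using hasSum_single n fun m (hm : m ≠ n) => if_neg hm.symm)

end LaurentOnCircle

lemma summable_norm_mul_pow_of_tendsto {E : Type*} [SeminormedAddCommGroup E] {a : ℕ → E}
    {r r' : ℝ} (hr : 0 ≤ r) (hrr' : r < r')
    (ha : Tendsto (fun k => ‖a k‖ * r' ^ k) atTop (𝓝 0)) :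
    Summable fun k => ‖a k‖ * r ^ k := by
  have hr' : 0 < r' := hr.trans_lt hrr'
  refine Summable.of_norm_bounded_eventually_nat
    (summable_geometric_of_lt_one (div_nonneg hr hr'.le) ((div_lt_one hr').2 hrr')) ?_
  filter_upwards [ha.eventually (ge_mem_nhds zero_lt_one)] with k hk
  rw [Real.norm_of_nonneg (by positivity), div_pow,
    show ‖a k‖ * r ^ k = ‖a k‖ * r' ^ k * (r ^ k / r' ^ k) by field_simp]
  exact mul_le_of_le_one_left (by positivity) hk

lemma Summable.hasSum_of_hasSum_nat_add_neg {G : Type*} [AddCommGroup G] [TopologicalSpace G]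
    [IsTopologicalAddGroup G] [T2Space G] {g : ℤ → G} {s : G} (hg : Summable g)
    (h : HasSum (fun n : ℕ => g (n + 1 : ℕ) + g (-(n + 1 : ℕ))) (s - g 0)) : HasSum g s := by
  have h' := (hasSum_nat_add_iff' 1).2 hg.hasSum.nat_add_neg
  simp only [Finset.range_one, Finset.sum_singleton, Nat.cast_add, Nat.cast_one, Nat.cast_zero,
    neg_zero] at h'
  convert hg.hasSum
  have := h.unique h'
  rwa [add_sub_add_right_eq_sub, sub_left_inj] at this

lemma summable_norm_natAbs_mul_zpow {a : ℕ → ℂ} {r : ℝ} (hr : 1 ≤ r)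
    (ha : Summable fun k => ‖a k‖ * r ^ k) :
    Summable fun m : ℤ => ‖a m.natAbs‖ * r ^ m := by
  refine .of_nat_of_neg_add_one (by simpa using ha) ?_
  refine ((summable_nat_add_iff 1).2 ha).of_nonneg_of_le (fun k => by positivity) fun k => ?_
  rw [← Nat.cast_succ, Int.natAbs_neg, Int.natAbs_natCast, ← zpow_natCast]
  gcongr
  omega

lemma hasSum_natAbs_mul_zpow {a : ℕ → ℂ} {w s : ℂ} (hw : 1 ≤ ‖w‖)
    (ha : Summable fun k => ‖a k‖ * ‖w‖ ^ k)
    (h : HasSum (fun k => a (k + 1) * (w ^ (k + 1) + w⁻¹ ^ (k + 1))) (s - a 0)) :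
    HasSum (fun m : ℤ => a m.natAbs * w ^ m) s := by
  refine Summable.hasSum_of_hasSum_nat_add_neg
    (.of_norm ((summable_norm_natAbs_mul_zpow hw ha).congr fun m => by simp)) ?_
  simpa only [Int.natAbs_neg, Int.natAbs_natCast, Int.natAbs_zero, zpow_neg, zpow_natCast,
    zpow_zero, mul_one, inv_pow, mul_add] using h

section Annulus

def HasSymmLaurentSeriesOn (R : ℝ) (a : ℕ → ℂ) (f : ℂ → ℂ) : Prop :=
  ∀ w : ℂ, 1 < ‖w‖ → ‖w‖ < R →
    HasSum (fun n : ℕ => a (n + 1) * (w ^ (n + 1) + w⁻¹ ^ (n + 1))) (f w - a 0)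

variable {R r : ℝ} {a : ℕ → ℂ} {f : ℂ → ℂ}

lemma HasSymmLaurentSeriesOn.summable_norm_mul_pow (hf : HasSymmLaurentSeriesOn R a f)
    (hr : 1 < r) (hrR : r < R) : Summable fun k => ‖a k‖ * r ^ k := by
  obtain ⟨r', hrr', hr'R⟩ := exists_between hrR
  have hr'0 : 0 < r' := by linarith
  have hr' : ‖(r' : ℂ)‖ = r' := by rw [norm_real, Real.norm_of_nonneg hr'0.le]
  have hs := hf r' (by rw [hr']; linarith) (by rwa [hr'])
  have hterms : Tendsto (fun k => ‖a (k + 1) * ((r' : ℂ) ^ (k + 1) + (r' : ℂ)⁻¹ ^ (k + 1))‖)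
      atTop (𝓝 0) := by
    simpa only [norm_zero] using hs.summable.tendsto_atTop_zero.norm
  refine summable_norm_mul_pow_of_tendsto (by linarith) hrr' ((tendsto_add_atTop_iff_nat 1).1 ?_)
  refine squeeze_zero (fun k => by positivity) (fun k => ?_) hterms
  have hsum : (r' : ℂ) ^ (k + 1) + (r' : ℂ)⁻¹ ^ (k + 1) =
      ((r' ^ (k + 1) + r'⁻¹ ^ (k + 1) : ℝ) : ℂ) := by
    push_cast
    ring
  rw [norm_mul, hsum, norm_real, Real.norm_of_nonneg (by positivity)]
  gcongr
  exact le_add_of_nonneg_right (by positivity)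

lemma HasSymmLaurentSeriesOn.hasSum_circleMap (hf : HasSymmLaurentSeriesOn R a f)
    (hr : 1 < r) (hrR : r < R) (θ : ℝ) :
    HasSum (fun m : ℤ => a m.natAbs * circleMap 0 r θ ^ m) (f (circleMap 0 r θ)) := by
  have hw : ‖circleMap 0 r θ‖ = r := by rw [norm_circleMap_zero, abs_of_pos (by linarith)]
  refine hasSum_natAbs_mul_zpow (by rw [hw]; exact hr.le) ?_ (hf _ (by rwa [hw]) (by rwa [hw]))
  rw [hw]
  exact hf.summable_norm_mul_pow hr hrR

lemma HasSymmLaurentSeriesOn.norm_mul_sub_inv_le (hf : HasSymmLaurentSeriesOn R a f)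
    (hb : ∀ w : ℂ, 1 < ‖w‖ → ‖w‖ < R → ‖f w‖ < 1)
    (hr : 1 < r) (hrR : r < R) {n : ℕ} (hn : 1 ≤ n) :
    ‖a n‖ * (r ^ n - (r ^ n)⁻¹) ≤ 2 * (1 - (a 0).re) := by
  have hr0 : 0 < r := by linarith
  have hF := hf.hasSum_circleMap hr hrR
  have hc := summable_norm_natAbs_mul_zpow hr.le (hf.summable_norm_mul_pow hr hrR)
  have hcoeff := fourierCoeffOn_of_hasSum_circleMap_zpow hr0 hc hF
  have hw : ∀ θ, ‖circleMap 0 r θ‖ = r := fun θ => by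
    rw [norm_circleMap_zero, abs_of_pos hr0]
  have key := norm_fourierCoeffOn_add_conj_le two_pi_pos
    (continuous_of_hasSum_circleMap_zpow hr0 hc hF)
    (fun θ => (re_le_norm _).trans (hb _ ((hw θ).symm ▸ hr) ((hw θ).symm ▸ hrR)).le)
    (n := n) (by omega)
  rw [hcoeff, hcoeff, hcoeff] at key
  calc ‖a n‖ * (r ^ n - (r ^ n)⁻¹) = ‖a n * r ^ n‖ - ‖conj (a n * r ^ (-n : ℤ))‖ := by
        rw [norm_conj, norm_mul, norm_mul, norm_pow, norm_zpow, norm_real,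
          Real.norm_of_nonneg hr0.le, zpow_neg, zpow_natCast]
        ring
    _ ≤ _ := norm_sub_le_norm_add _ _
    _ ≤ _ := by simpa using key

end Annulus

theorem coeff_bound_annulus_general (R : ℝ) (hR : 1 < R) (a : ℕ → ℂ) (f : ℂ → ℂ)
    (hf : ∀ w : ℂ, 1 < ‖w‖ → ‖w‖ < R →
      HasSum (fun n : ℕ => a (n + 1) * (w ^ (n + 1) + (w⁻¹) ^ (n + 1))) (f w - a 0))
    (hb : ∀ w : ℂ, 1 < ‖w‖ → ‖w‖ < R → ‖f w‖ < 1) :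
    ∀ n : ℕ, 1 ≤ n → ‖a n‖ ≤ 2 * (1 - (a 0).re) / (R ^ n - (R ^ n)⁻¹) := by
  intro n hn
  have hRn : 1 < R ^ n := one_lt_pow₀ hR (by omega)
  rw [le_div_iff₀ (sub_pos.2 ((inv_lt_one_of_one_lt₀ hRn).trans hRn))]
  have hcont : ContinuousAt (fun r : ℝ => ‖a n‖ * (r ^ n - (r ^ n)⁻¹)) R := by
    fun_prop (disch := exact pow_ne_zero _ (by positivity))
  refine le_of_tendsto (x := 𝓝[<] R) (hcont.tendsto.mono_left nhdsWithin_le_nhds) ?_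
  filter_upwards [Ioo_mem_nhdsLT hR] with r hr
  exact HasSymmLaurentSeriesOn.norm_mul_sub_inv_le hf hb hr.1 hr.2 hn

/-- If `f(w) = a₀ + Σ_{n≥1} aₙ (wⁿ + w⁻ⁿ)` is holomorphic on {1 < |w| < R}, |f| < 1 and
`a₀` is real with `a₀ > 0`, then `|aₙ| ≤ 2(1 - a₀)/(Rⁿ - R⁻ⁿ)` for all n ≥ 1. -/
theorem coeff_bound_annulus (R : ℝ) (hR : 1 < R) (a : ℕ → ℂ) (f : ℂ → ℂ)
    (hf : ∀ w : ℂ, 1 < ‖w‖ → ‖w‖ < R →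
      HasSum (fun n : ℕ => a (n + 1) * (w ^ (n + 1) + (w⁻¹) ^ (n + 1))) (f w - a 0))
    (hb : ∀ w : ℂ, 1 < ‖w‖ → ‖w‖ < R → ‖f w‖ < 1)
    (ha0_im : (a 0).im = 0) (ha0_pos : 0 < (a 0).re) :
    ∀ n : ℕ, 1 ≤ n → ‖a n‖ ≤ 2 * (1 - (a 0).re) / (R ^ n - (R ^ n)⁻¹) :=
  coeff_bound_annulus_general R hR a f hf hb
end

section
/- Let R > 1 satisfy Σ_{n=1}^{∞} 4R^n/(R^{2n} − 1) < 1. Let f be holomorphic on the annulus {1 < |w| < R} with Laurent expansion f(w) = a_0 + Σ_{n≥1} a_n(w^n + w^{-n}) where a_0 ≥ 0 is real, and suppose |f(w)| < 1 on the annulus. Let F_n(z) = 2T_n(z) for n ≥ 1, where T_n is the Chebyshev polynomial, so that ‖F_n‖_{[-1,1]} = 2. Then a_0 + Σ_{n≥1} |a_n| · ‖F_n‖_{[-1,1]} < 1, that is, a_0 + 2 Σ_{n≥1} |a_n| < 1. -/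
open Complex intervalIntegral Real MeasureTheory

lemma osc_full (k : ℤ) :
    (∫ θ in (0:ℝ)..(2*π), Complex.exp ((k : ℂ) * θ * Complex.I))
      = if k = 0 then (2*π : ℂ) else 0 := by
  rcases eq_or_ne k 0 with h | h
  · subst h; simp [mul_comm]
  · rw [if_neg h]
    have h1 : ∀ θ : ℝ, (k : ℂ) * θ * Complex.I = ((k : ℂ) * Complex.I) * θ := fun θ => by ring
    simp_rw [h1]
    rw [integral_exp_mul_complex (by simp [h, Complex.I_ne_zero])]
    have h2 : ((k : ℂ) * Complex.I) * ((2*π : ℝ) : ℂ) = (k : ℂ) * (2 * π * Complex.I) := by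
      push_cast; ring
    rw [h2, Complex.exp_int_mul_two_pi_mul_I]
    simp

lemma term_int (r : ℝ) (b : ℂ) (m : ℕ) (c : ℤ) :
    (∫ θ in (0:ℝ)..(2*π), b * (((r:ℂ) * Complex.exp (θ * Complex.I))^(m+1)
        + (((r:ℂ) * Complex.exp (θ * Complex.I))⁻¹)^(m+1)) * Complex.exp ((c:ℂ) * θ * Complex.I))
      = b * ((if (m:ℤ)+1+c = 0 then (2*π:ℂ) * (r:ℂ)^(m+1) else 0)
          + (if c = (m:ℤ)+1 then (2*π:ℂ) * ((r:ℂ)^(m+1))⁻¹ else 0)) := by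
  have hptA : ∀ θ : ℝ, ((r:ℂ) * Complex.exp (θ * Complex.I))^(m+1) * Complex.exp ((c:ℂ) * θ * Complex.I)
      = (r:ℂ)^(m+1) * Complex.exp ((((m:ℤ)+1+c : ℤ) : ℂ) * θ * Complex.I) := by
    intro θ
    rw [mul_pow, ← Complex.exp_nat_mul, mul_assoc, ← Complex.exp_add]
    congr 1
    push_cast; ring_nf
  have hptB : ∀ θ : ℝ, (((r:ℂ) * Complex.exp (θ * Complex.I))⁻¹)^(m+1) * Complex.exp ((c:ℂ) * θ * Complex.I)
      = ((r:ℂ)^(m+1))⁻¹ * Complex.exp (((c - ((m:ℤ)+1) : ℤ) : ℂ) * θ * Complex.I) := by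
    intro θ
    rw [mul_inv, ← Complex.exp_neg, mul_pow, ← Complex.exp_nat_mul, mul_assoc, ← Complex.exp_add,
      inv_pow]
    congr 1
    push_cast; ring_nf
  have hsplit : ∀ θ : ℝ, b * (((r:ℂ) * Complex.exp (θ * Complex.I))^(m+1)
        + (((r:ℂ) * Complex.exp (θ * Complex.I))⁻¹)^(m+1)) * Complex.exp ((c:ℂ) * θ * Complex.I)
      = b * ((r:ℂ)^(m+1) * Complex.exp ((((m:ℤ)+1+c : ℤ) : ℂ) * θ * Complex.I)
          + ((r:ℂ)^(m+1))⁻¹ * Complex.exp (((c - ((m:ℤ)+1) : ℤ) : ℂ) * θ * Complex.I)) := by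
    intro θ
    rw [← hptA θ, ← hptB θ]; ring
  simp_rw [hsplit]
  rw [intervalIntegral.integral_const_mul, intervalIntegral.integral_add
      ((Continuous.intervalIntegrable (by fun_prop) _ _))
      ((Continuous.intervalIntegrable (by fun_prop) _ _)),
    intervalIntegral.integral_const_mul, intervalIntegral.integral_const_mul, osc_full, osc_full]
  have hiff : (c - ((m:ℤ)+1) = 0) ↔ (c = (m:ℤ)+1) := by omega
  congr 2
  · rcases eq_or_ne ((m:ℤ)+1+c) 0 with h | h <;> simp [h, mul_comm]
  · rcases eq_or_ne c ((m:ℤ)+1) with h | h <;> simp [h, hiff, mul_comm]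

lemma key_r (R : ℝ) (hR : 1 < R)
    (a : ℕ → ℂ) (f : ℂ → ℂ)
    (hf : ∀ w : ℂ, 1 < ‖w‖ → ‖w‖ < R →
      HasSum (fun n : ℕ => a (n + 1) * (w ^ (n + 1) + (w⁻¹) ^ (n + 1))) (f w - a 0))
    (hb : ∀ w : ℂ, 1 < ‖w‖ → ‖w‖ < R → ‖f w‖ < 1)
    (r : ℝ) (hr1 : 1 < r) (hrR : r < R) :
    (a 0).re < 1 ∧ ∀ n : ℕ,
      ‖a (n+1)‖ * (r^(n+1) - (r^(n+1))⁻¹) ≤ 2 * (1 - (a 0).re) := by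
  have hr0 : (0:ℝ) < r := by linarith
  set w : ℝ → ℂ := fun θ => (r:ℂ) * Complex.exp (θ * Complex.I) with hw
  have hw_abs : ∀ θ : ℝ, ‖w θ‖ = r := by
    intro θ
    simp [hw, Complex.norm_exp, abs_of_pos hr0]
  have hw1 : ∀ θ : ℝ, 1 < ‖w θ‖ := fun θ => by rw [hw_abs]; exact hr1
  have hwR : ∀ θ : ℝ, ‖w θ‖ < R := fun θ => by rw [hw_abs]; exact hrR
  set g : ℕ → ℝ → ℂ := fun m θ => a (m+1) * ((w θ)^(m+1) + ((w θ)⁻¹)^(m+1)) with hg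
  have hws : ∀ θ : ℝ, HasSum (fun m => g m θ) (f (w θ) - a 0) := fun θ =>
    hf (w θ) (hw1 θ) (hwR θ)
  -- summable sup-norm bound
  obtain ⟨r', hr'1, hr'R⟩ : ∃ r' : ℝ, r < r' ∧ r' < R := ⟨(r + R) / 2, by linarith, by linarith⟩
  have hr'0 : (0:ℝ) < r' := by linarith
  have hC : ∃ C : ℝ, ∀ m : ℕ, ‖a (m+1)‖ * r'^(m+1) ≤ C := by
    have h := hf ((r' : ℝ) : ℂ) (by rw [Complex.norm_real, Real.norm_eq_abs, abs_of_pos hr'0]; linarith)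
      (by rw [Complex.norm_real, Real.norm_eq_abs, abs_of_pos hr'0]; exact hr'R)
    have h2 := h.summable.tendsto_atTop_zero.norm
    have h3 : BddAbove (Set.range fun m : ℕ =>
        ‖a (m+1) * (((r':ℝ):ℂ)^(m+1) + ((((r':ℝ):ℂ))⁻¹)^(m+1))‖) := by
      simpa using h2.bddAbove_range
    obtain ⟨C, hCb⟩ := h3
    refine ⟨C, fun m => ?_⟩
    have hmem := hCb (Set.mem_range_self (f := fun m : ℕ =>
      ‖a (m+1) * (((r':ℝ):ℂ)^(m+1) + ((((r':ℝ):ℂ))⁻¹)^(m+1))‖) m)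
    have hcast : (((r':ℝ):ℂ)^(m+1) + ((((r':ℝ):ℂ))⁻¹)^(m+1))
        = (((r'^(m+1) + (r'^(m+1))⁻¹ : ℝ)) : ℂ) := by
      push_cast [inv_pow]; ring
    have hval : ‖a (m+1) * (((r':ℝ):ℂ)^(m+1) + ((((r':ℝ):ℂ))⁻¹)^(m+1))‖
        = ‖a (m+1)‖ * (r'^(m+1) + (r'^(m+1))⁻¹) := by
      rw [norm_mul, hcast, Complex.norm_real, Real.norm_of_nonneg (by positivity)]
    rw [hval] at hmem
    nlinarith [norm_nonneg (a (m+1)), pow_pos hr'0 (m+1),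
      inv_nonneg.mpr (le_of_lt (pow_pos hr'0 (m+1)))]
  obtain ⟨C, hC⟩ := hC
  set u : ℕ → ℝ := fun m => ‖a (m+1)‖ * (r^(m+1) + (r^(m+1))⁻¹) with hu
  have hu_nonneg : ∀ m, 0 ≤ u m := fun m => by positivity
  have hu_bound : ∀ m θ, ‖g m θ‖ ≤ u m := by
    intro m θ
    have hX : ‖(w θ)^(m+1) + ((w θ)⁻¹)^(m+1)‖ ≤ r^(m+1) + (r^(m+1))⁻¹ := by
      calc ‖(w θ)^(m+1) + ((w θ)⁻¹)^(m+1)‖ ≤ ‖(w θ)^(m+1)‖ + ‖((w θ)⁻¹)^(m+1)‖ := norm_add_le _ _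
      _ = r^(m+1) + (r^(m+1))⁻¹ := by
          rw [norm_pow, norm_pow, norm_inv]
          simp only [hw_abs θ, inv_pow]
    calc ‖g m θ‖ = ‖a (m+1)‖ * ‖(w θ)^(m+1) + ((w θ)⁻¹)^(m+1)‖ := by
          rw [hg]; rw [norm_mul]
    _ ≤ ‖a (m+1)‖ * (r^(m+1) + (r^(m+1))⁻¹) :=
          mul_le_mul_of_nonneg_left hX (norm_nonneg _)
  have hu_sum : Summable u := by
    have hgeo : Summable (fun m : ℕ => 2 * C * (r / r')^(m+1)) := by
      apply Summable.mul_left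
      exact (summable_geometric_of_lt_one (by positivity) (by
        rw [div_lt_one hr'0]; exact hr'1)).comp_injective (add_left_injective 1)
    apply Summable.of_nonneg_of_le hu_nonneg _ hgeo
    intro m
    have h1 : ‖a (m+1)‖ * r'^(m+1) ≤ C := hC m
    have hp1 : 1 ≤ r^(m+1) := one_le_pow₀ hr1.le
    have h2 : (r^(m+1))⁻¹ ≤ r^(m+1) := le_trans (inv_le_one_of_one_le₀ hp1) hp1
    have h3 : u m ≤ ‖a (m+1)‖ * (2 * r^(m+1)) := by
      rw [hu]; nlinarith [norm_nonneg (a (m+1))]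
    calc u m ≤ ‖a (m+1)‖ * (2 * r^(m+1)) := h3
    _ = 2 * (‖a (m+1)‖ * r'^(m+1)) * (r / r')^(m+1) := by
        rw [div_pow]; field_simp
    _ ≤ 2 * C * (r / r')^(m+1) := by
        have : (0:ℝ) < (r/r')^(m+1) := by positivity
        nlinarith
  -- continuity facts
  have hw_cont : Continuous w := by
    rw [hw]; fun_prop
  have hw_ne : ∀ θ, w θ ≠ 0 := by
    intro θ h
    have h2 := hw_abs θ
    rw [h] at h2; simp at h2; linarith
  have hg_cont : ∀ m, Continuous (g m) := by
    intro m
    rw [hg]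
    exact continuous_const.mul ((hw_cont.pow _).add ((hw_cont.inv₀ hw_ne).pow _))
  have hG_cont : Continuous (fun θ => ∑' m, g m θ) :=
    continuous_tsum hg_cont hu_sum (fun m θ => hu_bound m θ)
  have hGf : ∀ θ, (∑' m, g m θ) = f (w θ) - a 0 := fun θ => (hws θ).tsum_eq
  have hfw_cont : Continuous (fun θ => f (w θ)) := by
    have he : (fun θ => f (w θ)) = fun θ => (∑' m, g m θ) + a 0 := by
      funext θ; rw [hGf θ]; ring
    rw [he]; exact hG_cont.add continuous_const
  have h2pi : (0:ℝ) ≤ 2*π := by positivity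
  -- the swap lemma
  have hψ_cont : ∀ c : ℤ, Continuous (fun θ : ℝ => Complex.exp ((c:ℂ) * θ * Complex.I)) := by
    intro c; fun_prop
  have hψ_norm : ∀ (c : ℤ) (θ : ℝ), ‖Complex.exp ((c:ℂ) * θ * Complex.I)‖ = 1 := by
    intro c θ
    have : (c:ℂ) * θ * Complex.I = (((c * θ : ℝ)):ℂ) * Complex.I := by push_cast; ring
    rw [this, Complex.norm_exp_ofReal_mul_I]
  have hswap : ∀ c : ℤ,
      HasSum (fun m => ∫ θ in (0:ℝ)..(2*π), g m θ * Complex.exp ((c:ℂ) * θ * Complex.I))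
        (∫ θ in (0:ℝ)..(2*π), (f (w θ) - a 0) * Complex.exp ((c:ℂ) * θ * Complex.I)) := by
    intro c
    have hint : ∀ m : ℕ, MeasureTheory.Integrable
        (fun θ => g m θ * Complex.exp ((c:ℂ) * θ * Complex.I))
        (MeasureTheory.volume.restrict (Set.Ioc (0:ℝ) (2*π))) :=
      fun m => ((hg_cont m).mul (hψ_cont c)).integrableOn_Ioc
    have hbnd : ∀ m : ℕ,
        (∫ θ in Set.Ioc (0:ℝ) (2*π), ‖g m θ * Complex.exp ((c:ℂ) * θ * Complex.I)‖) ≤ 2*π * u m := by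
      intro m
      have hle : ∀ θ : ℝ, ‖g m θ * Complex.exp ((c:ℂ) * θ * Complex.I)‖ ≤ u m := by
        intro θ
        rw [norm_mul, hψ_norm c θ, mul_one]
        exact hu_bound m θ
      calc (∫ θ in Set.Ioc (0:ℝ) (2*π), ‖g m θ * Complex.exp ((c:ℂ) * θ * Complex.I)‖)
          ≤ ∫ _θ in Set.Ioc (0:ℝ) (2*π), u m := by
            apply MeasureTheory.integral_mono_of_nonneg
            · exact Filter.Eventually.of_forall (fun θ => norm_nonneg _)
            · exact MeasureTheory.integrableOn_const (by
                rw [Real.volume_Ioc]; exact ENNReal.ofReal_ne_top)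
            · exact Filter.Eventually.of_forall hle
      _ = (2*π) * u m := by
            rw [MeasureTheory.setIntegral_const, Real.volume_real_Ioc_of_le h2pi, smul_eq_mul]
            rw [sub_zero]
    have hsummable : Summable (fun m : ℕ =>
        ∫ θ in Set.Ioc (0:ℝ) (2*π), ‖g m θ * Complex.exp ((c:ℂ) * θ * Complex.I)‖) := by
      apply Summable.of_nonneg_of_le
        (fun m => MeasureTheory.integral_nonneg (fun θ => norm_nonneg _)) hbnd
      exact hu_sum.mul_left _
    have hs := MeasureTheory.hasSum_integral_of_summable_integral_norm hint hsummable
    have hts : ∀ θ : ℝ, (∑' m, g m θ * Complex.exp ((c:ℂ) * θ * Complex.I))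
        = (f (w θ) - a 0) * Complex.exp ((c:ℂ) * θ * Complex.I) :=
      fun θ => ((hws θ).mul_right _).tsum_eq
    simp only [hts] at hs
    simpa only [intervalIntegral.integral_of_le h2pi] using hs
  -- term integrals
  have hterm : ∀ (m : ℕ) (c : ℤ),
      (∫ θ in (0:ℝ)..(2*π), g m θ * Complex.exp ((c:ℂ) * θ * Complex.I))
        = a (m+1) * ((if (m:ℤ)+1+c = 0 then (2*π:ℂ) * (r:ℂ)^(m+1) else 0)
            + (if c = (m:ℤ)+1 then (2*π:ℂ) * ((r:ℂ)^(m+1))⁻¹ else 0)) := by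
    intro m c
    have := term_int r (a (m+1)) m c
    simpa only [hg, hw] using this
  -- c = 0 : mean value
  have h0 := hswap 0
  simp only [Int.cast_zero, zero_mul, Complex.exp_zero, mul_one] at h0
  have hz0 : ∀ m : ℕ, (∫ θ in (0:ℝ)..(2*π), g m θ) = 0 := by
    intro m
    have h := hterm m 0
    simp only [Int.cast_zero, zero_mul, Complex.exp_zero, mul_one] at h
    rw [h, if_neg (by omega), if_neg (by omega)]
    simp
  have hI00 : (∫ θ in (0:ℝ)..(2*π), (f (w θ) - a 0)) = 0 := by
    have : (fun m : ℕ => (∫ θ in (0:ℝ)..(2*π), g m θ)) = fun _ => (0:ℂ) := funext hz0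
    rw [this] at h0
    exact (hasSum_zero.unique h0).symm
  have hI0 : (∫ θ in (0:ℝ)..(2*π), f (w θ)) = ((2*π : ℝ) : ℂ) * a 0 := by
    have hsp : (fun θ : ℝ => f (w θ)) = fun θ => (f (w θ) - a 0) + a 0 := by
      funext θ; ring
    rw [hsp, intervalIntegral.integral_add (f := fun θ => f (w θ) - a 0)
        ((hfw_cont.sub continuous_const).intervalIntegrable _ _)
        (intervalIntegrable_const), hI00, zero_add, intervalIntegral.integral_const,
      sub_zero, Complex.real_smul]
  have hIre : (∫ θ in (0:ℝ)..(2*π), (f (w θ)).re) = 2*π*(a 0).re := by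
    have h1 : (∫ θ in (0:ℝ)..(2*π), (f (w θ)).re) = (∫ θ in (0:ℝ)..(2*π), f (w θ)).re := by
      rw [intervalIntegral.integral_of_le h2pi, intervalIntegral.integral_of_le h2pi]
      have hIint : MeasureTheory.IntegrableOn (fun θ => f (w θ)) (Set.Ioc (0:ℝ) (2*π))
          MeasureTheory.volume := hfw_cont.integrableOn_Ioc
      simpa only [RCLike.re_to_complex] using integral_re hIint
    rw [h1, hI0, Complex.re_ofReal_mul]
  -- positivity of the mean of 1 - Re f
  have habsf : ∀ θ : ℝ, ‖f (w θ)‖ < 1 := fun θ => hb _ (hw1 θ) (hwR θ)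
  have hupos : ∀ θ : ℝ, 0 < 1 - (f (w θ)).re := by
    intro θ
    have h1 := Complex.abs_re_le_norm (f (w θ))
    have h2 := le_abs_self (f (w θ)).re
    have h3 := habsf θ
    linarith
  have hre_cont : Continuous (fun θ => (f (w θ)).re) := Complex.continuous_re.comp hfw_cont
  have hint_u : IntervalIntegrable (fun θ => 1 - (f (w θ)).re) MeasureTheory.volume 0 (2*π) :=
    (continuous_const.sub hre_cont).intervalIntegrable _ _
  have hpos0 : 0 < ∫ θ in (0:ℝ)..(2*π), (1 - (f (w θ)).re) :=
    intervalIntegral.intervalIntegral_pos_of_pos_on hint_u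
      (fun x _ => hupos x) (by positivity)
  have hval_u : (∫ θ in (0:ℝ)..(2*π), (1 - (f (w θ)).re)) = 2*π*(1 - (a 0).re) := by
    rw [intervalIntegral.integral_sub intervalIntegrable_const
        (hre_cont.intervalIntegrable _ _),
      intervalIntegral.integral_const, hIre]
    simp
    ring
  have hA1 : (a 0).re < 1 := by nlinarith [Real.pi_pos]
  refine ⟨hA1, fun n => ?_⟩
  -- the two oscillatory means
  have hIm : ∀ c : ℤ, (c = -((n:ℤ)+1) ∨ c = ((n:ℤ)+1)) →
      (∫ θ in (0:ℝ)..(2*π), (f (w θ) - a 0) * Complex.exp ((c:ℂ) * θ * Complex.I))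
        = a (n+1) * ((if c = -((n:ℤ)+1) then ((2*π:ℂ) * (r:ℂ)^(n+1)) else 0)
            + (if c = ((n:ℤ)+1) then ((2*π:ℂ) * ((r:ℂ)^(n+1))⁻¹) else 0)) := by
    intro c hc
    have hsingle : HasSum
        (fun m => ∫ θ in (0:ℝ)..(2*π), g m θ * Complex.exp ((c:ℂ) * θ * Complex.I))
        (a (n+1) * ((if c = -((n:ℤ)+1) then ((2*π:ℂ) * (r:ℂ)^(n+1)) else 0)
            + (if c = ((n:ℤ)+1) then ((2*π:ℂ) * ((r:ℂ)^(n+1))⁻¹) else 0))) := by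
      have hval : (∫ θ in (0:ℝ)..(2*π), g n θ * Complex.exp ((c:ℂ) * θ * Complex.I))
          = a (n+1) * ((if c = -((n:ℤ)+1) then ((2*π:ℂ) * (r:ℂ)^(n+1)) else 0)
            + (if c = ((n:ℤ)+1) then ((2*π:ℂ) * ((r:ℂ)^(n+1))⁻¹) else 0)) := by
        rw [hterm n c]
        rcases hc with h | h
        · subst h
          rw [if_pos (by omega), if_neg (by omega)]
          simp
        · subst h
          rw [if_neg (by omega), if_pos rfl,
            if_neg (show ((n:ℤ)+1) ≠ -((n:ℤ)+1) by omega)]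
      rw [← hval]
      apply hasSum_single n
      intro m hm
      rw [hterm m c]
      have hmn : (m:ℤ) ≠ (n:ℤ) := by exact_mod_cast hm
      rcases hc with h | h
      · subst h
        rw [if_neg (by omega), if_neg (by omega)]
        simp
      · subst h
        rw [if_neg (by omega), if_neg (by omega)]
        simp
    exact ((hswap c).unique hsingle)
  have hI1 : (∫ θ in (0:ℝ)..(2*π), (f (w θ) - a 0)
        * Complex.exp (((-((n:ℤ)+1) : ℤ):ℂ) * θ * Complex.I))
      = a (n+1) * ((2*π:ℂ) * (r:ℂ)^(n+1)) := by
    rw [hIm _ (Or.inl rfl), if_pos rfl, if_neg (by omega), add_zero]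
  have hI2 : (∫ θ in (0:ℝ)..(2*π), (f (w θ) - a 0)
        * Complex.exp ((((((n:ℤ)+1)) : ℤ):ℂ) * θ * Complex.I))
      = a (n+1) * ((2*π:ℂ) * ((r:ℂ)^(n+1))⁻¹) := by
    rw [hIm _ (Or.inr rfl), if_neg (by omega), if_pos rfl, zero_add]
  have hint1 : ∀ c : ℤ, IntervalIntegrable
      (fun θ => (f (w θ) - a 0) * Complex.exp ((c:ℂ) * θ * Complex.I))
      MeasureTheory.volume 0 (2*π) :=
    fun c => ((hfw_cont.sub continuous_const).mul (hψ_cont c)).intervalIntegrable _ _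
  have hcont2 : ∀ c : ℤ, Continuous
      (fun θ : ℝ => (1 - f (w θ)) * Complex.exp ((c:ℂ) * θ * Complex.I)) :=
    fun c => (continuous_const.sub hfw_cont).mul (hψ_cont c)
  have hT : ∀ c : ℤ, c ≠ 0 →
      (∫ θ in (0:ℝ)..(2*π), (1 - f (w θ)) * Complex.exp ((c:ℂ) * θ * Complex.I))
        = -(∫ θ in (0:ℝ)..(2*π), (f (w θ) - a 0) * Complex.exp ((c:ℂ) * θ * Complex.I)) := by
    intro c hc
    have hsp : ∀ θ : ℝ, (1 - f (w θ)) * Complex.exp ((c:ℂ) * θ * Complex.I)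
        = (1 - a 0) * Complex.exp ((c:ℂ) * θ * Complex.I)
          - (f (w θ) - a 0) * Complex.exp ((c:ℂ) * θ * Complex.I) := fun θ => by ring
    simp_rw [hsp]
    rw [intervalIntegral.integral_sub (f := fun θ : ℝ => (1 - a 0) * Complex.exp ((c:ℂ) * θ * Complex.I))
        ((continuous_const.mul (hψ_cont c)).intervalIntegrable _ _) (hint1 c),
      intervalIntegral.integral_const_mul, osc_full, if_neg hc]
    ring
  have hconjint : (∫ θ in (0:ℝ)..(2*π),
        (starRingEnd ℂ) ((1 - f (w θ)) * Complex.exp ((((n:ℤ)+1 : ℤ):ℂ) * θ * Complex.I)))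
      = (starRingEnd ℂ) (∫ θ in (0:ℝ)..(2*π),
        (1 - f (w θ)) * Complex.exp ((((n:ℤ)+1 : ℤ):ℂ) * θ * Complex.I)) := by
    rw [intervalIntegral.integral_of_le h2pi, intervalIntegral.integral_of_le h2pi]
    exact integral_conj
  have hpt : ∀ θ : ℝ, ((2*(1 - (f (w θ)).re) : ℝ) : ℂ)
        * Complex.exp (((-((n:ℤ)+1) : ℤ):ℂ) * θ * Complex.I)
      = (1 - f (w θ)) * Complex.exp (((-((n:ℤ)+1) : ℤ):ℂ) * θ * Complex.I)
        + (starRingEnd ℂ) ((1 - f (w θ)) * Complex.exp ((((n:ℤ)+1 : ℤ):ℂ) * θ * Complex.I)) := by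
    intro θ
    have hce : (starRingEnd ℂ) (Complex.exp ((((n:ℤ)+1 : ℤ):ℂ) * θ * Complex.I))
        = Complex.exp (((-((n:ℤ)+1) : ℤ):ℂ) * θ * Complex.I) := by
      rw [← Complex.exp_conj]
      congr 1
      rw [map_mul, map_mul, Complex.conj_I, Complex.conj_ofReal, map_intCast]
      push_cast
      ring
    rw [map_mul, hce, ← add_mul]
    congr 1
    rw [Complex.add_conj]
    norm_cast
  have hTsum : (∫ θ in (0:ℝ)..(2*π), ((2*(1 - (f (w θ)).re) : ℝ) : ℂ)
        * Complex.exp (((-((n:ℤ)+1) : ℤ):ℂ) * θ * Complex.I))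
      = -(a (n+1) * ((2*π:ℂ) * (r:ℂ)^(n+1)))
        + (starRingEnd ℂ) (-(a (n+1) * ((2*π:ℂ) * ((r:ℂ)^(n+1))⁻¹))) := by
    have hstarc : IntervalIntegrable (fun θ : ℝ => (starRingEnd ℂ)
        ((1 - f (w θ)) * Complex.exp ((((n:ℤ)+1 : ℤ):ℂ) * θ * Complex.I)))
        MeasureTheory.volume 0 (2*π) :=
      ((hcont2 ((n:ℤ)+1)).star).intervalIntegrable _ _
    simp_rw [hpt]
    rw [intervalIntegral.integral_add ((hcont2 (-((n:ℤ)+1))).intervalIntegrable _ _) hstarc,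
      hconjint, hT _ (by omega), hT _ (by omega), hI1, hI2]
  -- upper bound for the norm
  have hub : ‖-(a (n+1) * ((2*π:ℂ) * (r:ℂ)^(n+1)))
        + (starRingEnd ℂ) (-(a (n+1) * ((2*π:ℂ) * ((r:ℂ)^(n+1))⁻¹)))‖
      ≤ 2 * (2*π*(1 - (a 0).re)) := by
    rw [← hTsum]
    calc ‖∫ θ in (0:ℝ)..(2*π), ((2*(1 - (f (w θ)).re) : ℝ) : ℂ)
          * Complex.exp (((-((n:ℤ)+1) : ℤ):ℂ) * θ * Complex.I)‖
        = ‖∫ θ in (0:ℝ)..(2*π), ((2*(1 - (f (w θ)).re) : ℝ) : ℂ)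
          * Complex.exp (((-((n:ℤ)+1) : ℤ):ℂ) * θ * Complex.I)‖ :=
          rfl
    _ ≤ ∫ θ in (0:ℝ)..(2*π), ‖((2*(1 - (f (w θ)).re) : ℝ) : ℂ)
          * Complex.exp (((-((n:ℤ)+1) : ℤ):ℂ) * θ * Complex.I)‖ :=
          intervalIntegral.norm_integral_le_integral_norm h2pi
    _ = ∫ θ in (0:ℝ)..(2*π), 2*(1 - (f (w θ)).re) := by
          apply intervalIntegral.integral_congr
          intro θ _
          show ‖((2*(1 - (f (w θ)).re) : ℝ) : ℂ)
            * Complex.exp (((-((n:ℤ)+1) : ℤ):ℂ) * θ * Complex.I)‖ = 2*(1 - (f (w θ)).re)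
          rw [norm_mul, hψ_norm, mul_one, Complex.norm_real,
            Real.norm_of_nonneg (by linarith [hupos θ])]
    _ = 2 * ∫ θ in (0:ℝ)..(2*π), (1 - (f (w θ)).re) := by
          rw [intervalIntegral.integral_const_mul]
    _ = 2 * (2*π*(1 - (a 0).re)) := by rw [hval_u]
  -- lower bound for the norm
  have habsX : ‖a (n+1) * ((2*π:ℂ) * (r:ℂ)^(n+1))‖
      = ‖a (n+1)‖ * (2*π*r^(n+1)) := by
    rw [norm_mul, norm_mul, norm_pow]
    simp [Complex.norm_real, abs_of_pos Real.pi_pos, abs_of_pos hr0]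
  have habsY : ‖a (n+1) * ((2*π:ℂ) * ((r:ℂ)^(n+1))⁻¹)‖
      = ‖a (n+1)‖ * (2*π*(r^(n+1))⁻¹) := by
    rw [norm_mul, norm_mul, norm_inv, norm_pow]
    simp [Complex.norm_real, abs_of_pos Real.pi_pos, abs_of_pos hr0]
  have hlb : ‖a (n+1)‖ * (2*π*r^(n+1)) - ‖a (n+1)‖ * (2*π*(r^(n+1))⁻¹)
      ≤ ‖-(a (n+1) * ((2*π:ℂ) * (r:ℂ)^(n+1)))
        + (starRingEnd ℂ) (-(a (n+1) * ((2*π:ℂ) * ((r:ℂ)^(n+1))⁻¹)))‖ := by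
    set X := a (n+1) * ((2*π:ℂ) * (r:ℂ)^(n+1)) with hX
    set Y := a (n+1) * ((2*π:ℂ) * ((r:ℂ)^(n+1))⁻¹) with hY
    have h1 : X = -(-X + (starRingEnd ℂ) (-Y)) + (starRingEnd ℂ) (-Y) := by ring
    have h2 : ‖X‖ ≤ ‖-X + (starRingEnd ℂ) (-Y)‖ + ‖Y‖ := by
      calc ‖X‖ = ‖-(-X + (starRingEnd ℂ) (-Y)) + (starRingEnd ℂ) (-Y)‖ := by
            rw [← h1]
      _ ≤ ‖-(-X + (starRingEnd ℂ) (-Y))‖ + ‖(starRingEnd ℂ) (-Y)‖ :=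
            norm_add_le _ _
      _ = ‖-X + (starRingEnd ℂ) (-Y)‖ + ‖Y‖ := by
            rw [norm_neg, Complex.norm_conj, norm_neg]
    rw [← habsX, ← habsY]
    linarith
  -- conclude
  have hfin := le_trans hlb hub
  nlinarith [Real.pi_pos]

/-- Bohr's phenomenon for the elliptic condensator K = [-1,1]: if
`Σ_{n≥1} 4Rⁿ/(R²ⁿ-1) < 1`, `f(w) = a₀ + Σ_{n≥1} aₙ(wⁿ + w⁻ⁿ)` is holomorphic on the
annulus {1 < |w| < R} with `|f| < 1` and `a₀ ≥ 0` real, then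
`a₀ + Σ_{n≥1} |aₙ| ‖F_n‖_{[-1,1]} < 1`, where `‖F_n‖_{[-1,1]} = 2`. -/
theorem bohr_elliptic (R : ℝ) (hR : 1 < R)
    (hφ : (∑' n : ℕ, 4 * R ^ (n + 1) / (R ^ (2 * (n + 1)) - 1)) < 1)
    (a : ℕ → ℂ) (f : ℂ → ℂ)
    (hf : ∀ w : ℂ, 1 < ‖w‖ → ‖w‖ < R →
      HasSum (fun n : ℕ => a (n + 1) * (w ^ (n + 1) + (w⁻¹) ^ (n + 1))) (f w - a 0))
    (hb : ∀ w : ℂ, 1 < ‖w‖ → ‖w‖ < R → ‖f w‖ < 1)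
    (ha0_im : (a 0).im = 0) (ha0_nonneg : 0 ≤ (a 0).re) :
    (a 0).re + ∑' n : ℕ, ‖a (n + 1)‖ * 2 < 1 := by
  set A : ℝ := (a 0).re with hA
  have hA1 : A < 1 := (key_r R hR a f hf hb ((1+R)/2) (by linarith) (by linarith)).1
  have hA1' : 0 < 1 - A := by linarith
  -- coefficient bound at radius R by passing to the limit
  have hcoef : ∀ n : ℕ,
      ‖a (n+1)‖ * (R^(n+1) - (R^(n+1))⁻¹) ≤ 2 * (1 - A) := by
    intro n
    have hc : ContinuousAt (fun x : ℝ => ‖a (n+1)‖ * (x^(n+1) - (x^(n+1))⁻¹)) R := by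
      apply ContinuousAt.mul continuousAt_const
      apply ContinuousAt.sub (continuousAt_id.pow _)
      exact ContinuousAt.inv₀ (continuousAt_id.pow _) (by positivity)
    have htend : Filter.Tendsto (fun x : ℝ => ‖a (n+1)‖ * (x^(n+1) - (x^(n+1))⁻¹))
        (nhdsWithin R (Set.Iio R)) (nhds (‖a (n+1)‖ * (R^(n+1) - (R^(n+1))⁻¹))) :=
      (hc.tendsto).mono_left nhdsWithin_le_nhds
    apply le_of_tendsto htend
    filter_upwards [Ioo_mem_nhdsLT_of_mem (Set.mem_Ioc.mpr ⟨hR, le_refl R⟩)] with r hr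
    exact (key_r R hR a f hf hb r hr.1 hr.2).2 n
  -- term-by-term comparison with the series of the hypothesis
  have hterm_le : ∀ n : ℕ, ‖a (n+1)‖ * 2
      ≤ (1 - A) * (4 * R ^ (n + 1) / (R ^ (2 * (n + 1)) - 1)) := by
    intro n
    have hP1 : (1:ℝ) < R^(n+1) := one_lt_pow₀ hR (Nat.succ_ne_zero n)
    have h2R : R^(2*(n+1)) = (R^(n+1))^2 := by rw [mul_comm 2 (n+1), pow_mul]
    have hPinv : R^(n+1) * (R^(n+1))⁻¹ = 1 := mul_inv_cancel₀ (by positivity)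
    have hden : (0:ℝ) < (R^(n+1))^2 - 1 := by nlinarith
    have hrw : (1 - A) * (4 * R ^ (n + 1) / (R ^ (2 * (n + 1)) - 1))
        = ((1 - A) * (4 * R ^ (n+1))) / ((R^(n+1))^2 - 1) := by
      rw [h2R]; ring
    rw [hrw, le_div_iff₀ hden]
    have h3 := mul_le_mul_of_nonneg_left (hcoef n)
      (show (0:ℝ) ≤ 2*R^(n+1) by positivity)
    nlinarith [h3, hPinv, norm_nonneg (a (n+1))]
  -- summability of the comparison series
  have hq1 : R⁻¹ < 1 := inv_lt_one_of_one_lt₀ hR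
  have hq0 : (0:ℝ) < R⁻¹ := by positivity
  have hs_sum : Summable (fun n : ℕ => 4 * R ^ (n + 1) / (R ^ (2 * (n + 1)) - 1)) := by
    have hgeo : Summable (fun n : ℕ => (4 / (1 - R⁻¹^2)) * (R⁻¹)^(n+1)) :=
      Summable.mul_left _ ((summable_geometric_of_lt_one hq0.le hq1).comp_injective
        (add_left_injective 1))
    apply Summable.of_nonneg_of_le _ _ hgeo
    · intro n
      have hP1 : (1:ℝ) < R^(n+1) := one_lt_pow₀ hR (Nat.succ_ne_zero n)
      have h2R : R^(2*(n+1)) = (R^(n+1))^2 := by rw [mul_comm 2 (n+1), pow_mul]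
      rw [h2R]
      have hden : (0:ℝ) < (R^(n+1))^2 - 1 := by nlinarith
      positivity
    · intro n
      have hP1 : (1:ℝ) < R^(n+1) := one_lt_pow₀ hR (Nat.succ_ne_zero n)
      have h2R : R^(2*(n+1)) = (R^(n+1))^2 := by rw [mul_comm 2 (n+1), pow_mul]
      have hden : (0:ℝ) < (R^(n+1))^2 - 1 := by nlinarith
      have hq2 : (0:ℝ) < 1 - R⁻¹^2 := by nlinarith
      have hRn1 : (1:ℝ) ≤ R^n := one_le_pow₀ hR.le
      have hPq : R^(n+1) * R⁻¹ = R^n := by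
        rw [pow_succ, mul_assoc, mul_inv_cancel₀ (by positivity), mul_one]
      have hiq : (R⁻¹)^(n+1) = R⁻¹^(n+1) := rfl
      rw [h2R]
      have hrw2 : (4 / (1 - R⁻¹^2)) * (R⁻¹)^(n+1)
          = (4 * (R⁻¹^(n+1))) / (1 - R⁻¹^2) := by ring
      rw [hrw2, div_le_div_iff₀ hden hq2]
      have hq3 : R^(n+1) * R⁻¹^(n+1) = 1 := by
        rw [← mul_pow, mul_inv_cancel₀ (by positivity), one_pow]
      nlinarith [pow_pos hq0 (n+1), pow_pos (lt_trans one_pos hR) (n+1),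
        mul_le_mul_of_nonneg_left hRn1 (le_of_lt (pow_pos hq0 (n+1)))]
  -- sum up
  have hsum_le : Summable (fun n : ℕ => ‖a (n+1)‖ * 2) := by
    apply Summable.of_nonneg_of_le (fun n => by positivity) hterm_le (hs_sum.mul_left _)
  have htsum : (∑' n : ℕ, ‖a (n+1)‖ * 2)
      ≤ (1 - A) * (∑' n : ℕ, 4 * R ^ (n + 1) / (R ^ (2 * (n + 1)) - 1)) := by
    rw [← tsum_mul_left]
    exact Summable.tsum_le_tsum hterm_le hsum_le (hs_sum.mul_left _)
  have hlt : (1 - A) * (∑' n : ℕ, 4 * R ^ (n + 1) / (R ^ (2 * (n + 1)) - 1)) < 1 - A := by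
    nlinarith [hφ, hA1']
  linarith [htsum, hlt]
end
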